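/- arXiv:1201.5513 — 6 statements merged into one kernel-verified Lean document; each statement's English description precedes it below -/
import Mathlib

section
/- Any laminar family of subsets of a finite set C (i.e., any two members are either disjoint or one contains the other) verifies the Consecutive Ones Property. -/
variable {C : Type*} [Fintype C] [DecidableEq C]

/-- A family `R` of subsets of the finite set `C` verifies the Consecutive Ones Property:
there is a bijection `σ : C ≃ Fin |C|` under which every member of `R` is an interval. -/
def IsC1P (R : Finset (Finset C)) : Prop :=
  ∃ σ : C ≃ Fin (Fintype.card C),
    ∀ r ∈ R, ∃ a b : ℕ, ∀ x : C, x ∈ r ↔ a ≤ (σ x : ℕ) ∧ (σ x : ℕ) ≤ b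

/-- A Minimal Conflicting Set: nonempty, not C1P, but every proper subfamily is C1P. -/
def IsMCS (S : Finset (Finset C)) : Prop :=
  S.Nonempty ∧ ¬ IsC1P S ∧ ∀ T ⊂ S, IsC1P T

/-- Two sets overlap. -/
def Overlap (X Y : Finset C) : Prop :=
  (X ∩ Y).Nonempty ∧ (X \ Y).Nonempty ∧ (Y \ X).Nonempty

/-! Rank the members of `R` along a linear extension `enc` of inclusion and give each point `x`
the code `{enc s | x ∈ s ∈ R}`, compared colexicographically. A member ranked above `r` either
contains `r` or is disjoint from it, so the codes of the points of `r` agree above `enc r`, while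
the code of a point outside `r` misses `enc r`. Colex comparison with such a code is therefore the
same for all points of `r`, so no outside point lies between two points of `r`, and sorting the
points by code makes every member of `R` an interval. -/

open Finset

theorem Finset.Colex.toColex_lt_of_forall_ge_mem_iff {α : Type*} [LinearOrder α] {s t u : Finset α}
    {k : α} (hks : k ∈ s) (hku : k ∉ u) (hst : ∀ a, k ≤ a → (a ∈ s ↔ a ∈ t))
    (hsu : toColex s < toColex u) : toColex t < toColex u := by
  rw [Colex.lt_iff_exists_filter_lt] at hsu ⊢
  obtain ⟨w, hw, hsu⟩ := hsu
  rw [mem_sdiff] at hw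
  have hkw : k < w := by
    have hwk : ¬ w < k := fun hwk => hku (mem_filter.1 (hsu ▸ mem_filter.2 ⟨hks, hwk⟩)).1
    exact (not_lt.1 hwk).lt_of_ne (ne_of_mem_of_not_mem hks hw.2)
  refine ⟨w, mem_sdiff.2 ⟨hw.1, fun hwt => hw.2 ((hst w hkw.le).2 hwt)⟩, ?_⟩
  rw [← hsu]
  ext a
  simp only [mem_filter, and_congr_left_iff]
  exact fun haw => (hst a (hkw.trans haw).le).symm

def Finset.IsConsecutiveBy {α β : Type*} [Preorder β] (f : α → β) (r : Finset α) : Prop :=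
  ∀ u ∈ r, ∀ v ∈ r, ∀ y, f u ≤ f y → f y ≤ f v → y ∈ r

theorem isC1P_of_forall_isConsecutiveBy {α β : Type*} [Fintype α] [LinearOrder β]
    (R : Finset (Finset α)) (f : α → β) (hf : ∀ r ∈ R, r.IsConsecutiveBy f) : IsC1P R := by
  let e := Fintype.equivFin α
  let σ : α ≃ Fin (Fintype.card α) := e.trans (Tuple.sort (f ∘ e.symm)).symm
  have hσ : Monotone (f ∘ σ.symm) := Tuple.monotone_sort (f ∘ e.symm)
  have hle {x y : α} (hxy : (σ x : ℕ) ≤ σ y) : f x ≤ f y := by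
    simpa using hσ (Fin.le_iff_val_le_val.2 hxy)
  refine ⟨σ, fun r hr => ?_⟩
  obtain rfl | hne := r.eq_empty_or_nonempty
  · exact ⟨1, 0, fun x => iff_of_false (notMem_empty x) (by omega)⟩
  obtain ⟨u, hu, hmin⟩ := r.exists_min_image (fun x => (σ x : ℕ)) hne
  obtain ⟨v, hv, hmax⟩ := r.exists_max_image (fun x => (σ x : ℕ)) hne
  exact ⟨σ u, σ v, fun x => ⟨fun hx => ⟨hmin x hx, hmax x hx⟩,
    fun ⟨hux, hxv⟩ => hf r hr u hu v hv x (hle hux) (hle hxv)⟩⟩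

section Laminar

variable {α ι : Type*} [DecidableEq α] [LinearOrder ι]

def IsLaminar (R : Finset (Finset α)) : Prop :=
  ∀ r ∈ R, ∀ s ∈ R, r ∩ s = ∅ ∨ r ⊆ s ∨ s ⊆ r

theorem IsLaminar.mem_iff_mem_of_le {R : Finset (Finset α)} (hR : IsLaminar R)
    {enc : Finset α → ι} (hmono : StrictMono enc) {r s : Finset α} (hr : r ∈ R) (hs : s ∈ R)
    (hrs : enc r ≤ enc s) {u v : α} (hu : u ∈ r) (hv : v ∈ r) : u ∈ s ↔ v ∈ s := by
  rcases hR r hr s hs with hdisj | hsub | hsub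
  · have hdisj := disjoint_iff_inter_eq_empty.2 hdisj
    exact iff_of_false (disjoint_left.1 hdisj hu) (disjoint_left.1 hdisj hv)
  · exact iff_of_true (hsub hu) (hsub hv)
  · obtain rfl : s = r := hsub.eq_of_not_ssubset fun hssub => (hmono hssub).not_ge hrs
    exact iff_of_true hu hv

noncomputable def colexCode (enc : Finset α → ι) (R : Finset (Finset α)) (x : α) :
    Colex (Finset ι) :=
  toColex ((R.filter (x ∈ ·)).image enc)

theorem IsLaminar.isConsecutiveBy_colexCode {R : Finset (Finset α)} (hR : IsLaminar R)
    {enc : Finset α → ι} (henc : Function.Injective enc) (hmono : StrictMono enc)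
    {r : Finset α} (hr : r ∈ R) : r.IsConsecutiveBy (colexCode enc R) := by
  intro u hu v hv y huy hyv
  by_contra hy
  have mem_code {x : α} {s : Finset α} (hs : s ∈ R) (hx : x ∈ s) :
      enc s ∈ (R.filter (x ∈ ·)).image enc :=
    mem_image_of_mem enc (mem_filter.2 ⟨hs, hx⟩)
  have not_mem_code : enc r ∉ (R.filter (y ∈ ·)).image enc := by
    simp only [mem_image, mem_filter, henc.eq_iff]
    rintro ⟨s, ⟨-, hys⟩, rfl⟩
    exact hy hys
  have agree : ∀ a, enc r ≤ a →
      (a ∈ (R.filter (u ∈ ·)).image enc ↔ a ∈ (R.filter (v ∈ ·)).image enc) := by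
    intro a ha
    simp only [mem_image, mem_filter]
    constructor <;> rintro ⟨s, ⟨hs, hxs⟩, rfl⟩
    · exact ⟨s, ⟨hs, (hR.mem_iff_mem_of_le hmono hr hs ha hu hv).1 hxs⟩, rfl⟩
    · exact ⟨s, ⟨hs, (hR.mem_iff_mem_of_le hmono hr hs ha hu hv).2 hxs⟩, rfl⟩
  have hlt : colexCode enc R u < colexCode enc R y :=
    huy.lt_of_ne fun h => not_mem_code (toColex_inj.1 h ▸ mem_code hr hu)
  exact (Colex.toColex_lt_of_forall_ge_mem_iff (mem_code hr hu) not_mem_code agree hlt).not_ge hyv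

end Laminar

theorem c1p_of_laminar (R : Finset (Finset C))
    (h : ∀ r ∈ R, ∀ s ∈ R, r ∩ s = ∅ ∨ r ⊆ s ∨ s ⊆ r) :
    IsC1P R := by
  let enc : Finset C → LinearExtension (Finset C) := toLinearExtension
  have henc : Function.Injective enc := fun _ _ => id
  exact isC1P_of_forall_isConsecutiveBy R (colexCode enc R) fun _ hr =>
    IsLaminar.isConsecutiveBy_colexCode h henc
      (toLinearExtension.monotone.strictMono_of_injective henc) hr
end

section
/- In any Minimal Conflicting Set of size 3, the three rows pairwise intersect (each pair has nonempty intersection). -/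
/-! If two of the three rows, `r` and `s`, were disjoint, the triple would have the C1P whatever
the third row `t` is: order the columns as `r \ t`, `r ∩ t`, `t \ (r ∪ s)`, `t ∩ s`, `s \ t` and
then the rest, so that `r`, `t` and `s` become intervals. -/

variable {C : Type*} [Fintype C] [DecidableEq C]

open Finset

theorem Finset.exists_eq_insert_insert_singleton_of_card_eq_three {α : Type*} [DecidableEq α]
    {S : Finset α} (hcard : S.card = 3) {r s : α} (hr : r ∈ S) (hs : s ∈ S) (hrs : r ≠ s) :
    ∃ t, S = {r, s, t} := by
  have hs' : s ∈ S.erase r := mem_erase.2 ⟨hrs.symm, hs⟩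
  obtain ⟨t, ht⟩ := card_eq_one.1 <| by
    rw [card_erase_of_mem hs', card_erase_of_mem hr, hcard]
  exact ⟨t, by rw [← insert_erase hr, ← insert_erase hs', ht]⟩

theorem isC1P_of_ordConnected {ι : Type*} [Fintype ι] (R : Finset (Finset ι))
    (σ : ι ≃ Fin (Fintype.card ι))
    (hR : ∀ r ∈ R, ∀ x ∈ r, ∀ z ∈ r, ∀ y, σ x ≤ σ y → σ y ≤ σ z → y ∈ r) : IsC1P R := by
  refine ⟨σ, fun r hr => ?_⟩
  rcases r.eq_empty_or_nonempty with rfl | hne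
  · exact ⟨1, 0, fun x => by simp only [notMem_empty, false_iff]; omega⟩
  obtain ⟨x, hx, hxmin⟩ := r.exists_min_image σ hne
  obtain ⟨z, hz, hzmax⟩ := r.exists_max_image σ hne
  refine ⟨σ x, σ z, fun y => ⟨fun hy => ⟨hxmin y hy, hzmax y hy⟩, fun ⟨hxy, hyz⟩ => ?_⟩⟩
  exact hR r hr x hx z hz y (Fin.le_def.2 hxy) (Fin.le_def.2 hyz)

theorem exists_equiv_fin_monotone {ι α : Type*} [Fintype ι] [LinearOrder α] (w : ι → α) :
    ∃ σ : ι ≃ Fin (Fintype.card ι), Monotone (w ∘ σ.symm) := by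
  let e := Fintype.equivFin ι
  refine ⟨e.trans (Tuple.sort (w ∘ e.symm)).symm, ?_⟩
  simpa [Function.comp_def] using Tuple.monotone_sort (w ∘ e.symm)

theorem isC1P_of_weight {ι α : Type*} [Fintype ι] [LinearOrder α] (R : Finset (Finset ι))
    (w : ι → α) (hR : ∀ r ∈ R, ∃ a b : α, ∀ x, x ∈ r ↔ a ≤ w x ∧ w x ≤ b) : IsC1P R := by
  obtain ⟨σ, hσ⟩ := exists_equiv_fin_monotone w
  have hw : ∀ x y, σ x ≤ σ y → w x ≤ w y := fun x y hxy => by simpa using hσ hxy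
  refine isC1P_of_ordConnected R σ fun r hr x hx z hz y hxy hyz => ?_
  obtain ⟨a, b, hab⟩ := hR r hr
  exact (hab y).2 ⟨((hab x).1 hx).1.trans (hw x y hxy), (hw y z hyz).trans ((hab z).1 hz).2⟩

theorem isC1P_triple_of_disjoint {r s : Finset C} (hrs : Disjoint r s) (t : Finset C) :
    IsC1P ({r, s, t} : Finset (Finset C)) := by
  let w : C → ℕ := fun x =>
    if x ∈ r then (if x ∈ t then 1 else 0)
    else if x ∈ t then (if x ∈ s then 3 else 2)
    else if x ∈ s then 4 else 5
  refine isC1P_of_weight _ w ?_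
  simp only [mem_insert, mem_singleton, forall_eq_or_imp, forall_eq]
  refine ⟨⟨0, 1, fun x => ?_⟩, ⟨3, 4, fun x => ?_⟩, ⟨1, 3, fun x => ?_⟩⟩ <;>
    have := @disjoint_left.1 hrs x <;> simp only [w] <;> split_ifs <;> simp_all

theorem mcs_three_pairwise_intersect (S : Finset (Finset C)) (h : IsMCS S)
    (hcard : S.card = 3) :
    ∀ r ∈ S, ∀ s ∈ S, r ≠ s → (r ∩ s).Nonempty := by
  intro r hr s hs hrs
  by_contra hdisj
  rw [not_nonempty_iff_eq_empty, ← disjoint_iff_inter_eq_empty] at hdisj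
  obtain ⟨t, rfl⟩ := exists_eq_insert_insert_singleton_of_card_eq_three hcard hr hs hrs
  exact h.2.1 (isC1P_triple_of_disjoint hdisj t)
end

section
/- Let A, B, C be three subsets of a finite set such that each pair overlaps (nonempty intersection and nonempty differences in both directions) and each of A \ (B ∪ C), B \ (A ∪ C), C \ (A ∪ B) is nonempty. Then the family {A, B, C} does not verify the C1P. -/
variable {C : Type*} [Fintype C] [DecidableEq C]

/-!
Of three points of a line, one lies between the other two. If each of three pairwise
intersecting intervals had a private point, the middle private point would lie between a point
of the first interval and a point of the third, hence between two points of one of them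
(split at a common point of the two), so it would not be private.
-/

namespace Set

variable {α β : Type*} [LinearOrder α]

lemma mem_uIcc_or_mem_uIcc_or_mem_uIcc (a b c : α) :
    a ∈ uIcc b c ∨ b ∈ uIcc a c ∨ c ∈ uIcc a b := by
  simp only [mem_uIcc]
  rcases le_total a b with _ | _ <;> rcases le_total b c with _ | _ <;>
    rcases le_total a c with _ | _ <;> tauto

lemma OrdConnected.mem_union_of_mem_uIcc {I J : Set α} (hI : I.OrdConnected)
    (hJ : J.OrdConnected) (hIJ : (I ∩ J).Nonempty) {a b c : α} (ha : a ∈ I) (hc : c ∈ J)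
    (hb : b ∈ uIcc a c) : b ∈ I ∪ J := by
  obtain ⟨x, hxI, hxJ⟩ := hIJ
  rcases uIcc_subset_uIcc_union_uIcc hb with hb | hb
  · exact Or.inl (hI.uIcc_subset ha hxI hb)
  · exact Or.inr (hJ.uIcc_subset hxJ hc hb)

lemma OrdConnected.subset_union_or_subset_union_or_subset_union {I J K : Set α}
    (hI : I.OrdConnected) (hJ : J.OrdConnected) (hK : K.OrdConnected)
    (hIJ : (I ∩ J).Nonempty) (hJK : (J ∩ K).Nonempty) (hIK : (I ∩ K).Nonempty) :
    I ⊆ J ∪ K ∨ J ⊆ I ∪ K ∨ K ⊆ I ∪ J := by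
  by_contra! h
  obtain ⟨⟨a, haI, haJK⟩, ⟨b, hbJ, hbIK⟩, ⟨c, hcK, hcIJ⟩⟩ :=
    And.imp not_subset.1 (And.imp not_subset.1 not_subset.1) h
  rcases mem_uIcc_or_mem_uIcc_or_mem_uIcc a b c with ha | hb | hc
  · exact haJK (hJ.mem_union_of_mem_uIcc hK hJK hbJ hcK ha)
  · exact hbIK (hI.mem_union_of_mem_uIcc hK hIK haI hcK hb)
  · exact hcIJ (hI.mem_union_of_mem_uIcc hJ hIJ haI hbJ hc)

lemma OrdConnected.preimage_subset_union_or_subset_union_or_subset_union (f : β → α)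
    {I J K : Set α} (hI : I.OrdConnected) (hJ : J.OrdConnected) (hK : K.OrdConnected)
    (hIJ : (f ⁻¹' I ∩ f ⁻¹' J).Nonempty) (hJK : (f ⁻¹' J ∩ f ⁻¹' K).Nonempty)
    (hIK : (f ⁻¹' I ∩ f ⁻¹' K).Nonempty) :
    f ⁻¹' I ⊆ f ⁻¹' J ∪ f ⁻¹' K ∨ f ⁻¹' J ⊆ f ⁻¹' I ∪ f ⁻¹' K ∨
      f ⁻¹' K ⊆ f ⁻¹' I ∪ f ⁻¹' J := by
  have image_inter {S T : Set α} : (f ⁻¹' S ∩ f ⁻¹' T).Nonempty → (S ∩ T).Nonempty :=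
    fun ⟨x, hx⟩ => ⟨f x, hx⟩
  simp only [← preimage_union]
  refine (hI.subset_union_or_subset_union_or_subset_union hJ hK (image_inter hIJ)
    (image_inter hJK) (image_inter hIK)).imp (_root_.Set.preimage_mono ·) (Or.imp ?_ ?_) <;>
    exact (_root_.Set.preimage_mono ·)

end Set

lemma IsC1P.exists_ordConnected_preimage {β : Type*} [Fintype β] {R : Finset (Finset β)}
    (h : IsC1P R) : ∃ f : β → ℕ, ∀ r ∈ R, ∃ I : Set ℕ, I.OrdConnected ∧ (r : Set β) = f ⁻¹' I := by
  obtain ⟨σ, hσ⟩ := h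
  refine ⟨fun x => σ x, fun r hr => ?_⟩
  obtain ⟨a, b, hab⟩ := hσ r hr
  exact ⟨Set.Icc a b, Set.ordConnected_Icc, Set.ext fun x => by simpa using hab x⟩

theorem formIV_size3_not_c1p (A B c : Finset C)
    (hAB : Overlap A B) (hBC : Overlap B c) (hAC : Overlap A c)
    (hA : (A \ (B ∪ c)).Nonempty) (hB : (B \ (A ∪ c)).Nonempty)
    (hC : (c \ (A ∪ B)).Nonempty) :
    ¬ IsC1P {A, B, c} := by
  intro h
  obtain ⟨f, hf⟩ := h.exists_ordConnected_preimage
  obtain ⟨I, hI, hAI⟩ := hf A (by simp)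
  obtain ⟨J, hJ, hBJ⟩ := hf B (by simp)
  obtain ⟨K, hK, hcK⟩ := hf c (by simp)
  have hcover := hI.preimage_subset_union_or_subset_union_or_subset_union f hJ hK
    (by rw [← hAI, ← hBJ]; exact_mod_cast hAB.1) (by rw [← hBJ, ← hcK]; exact_mod_cast hBC.1)
    (by rw [← hAI, ← hcK]; exact_mod_cast hAC.1)
  rw [← hAI, ← hBJ, ← hcK] at hcover
  norm_cast at hcover
  rcases hcover with hcover | hcover | hcover
  exacts [hA.ne_empty (Finset.sdiff_eq_empty_iff_subset.2 hcover),
    hB.ne_empty (Finset.sdiff_eq_empty_iff_subset.2 hcover),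
    hC.ne_empty (Finset.sdiff_eq_empty_iff_subset.2 hcover)]
end

section
/- Let r, A, B, C be subsets of a finite set such that A, B, C are pairwise disjoint and each of A, B, C overlaps r (i.e., for X ∈ {A,B,C}: X ∩ r ≠ ∅, X \ r ≠ ∅ and r \ X ≠ ∅ — in fact X ∩ r ≠ ∅ and X \ r ≠ ∅ suffice). Then the family {r, A, B, C} does not verify the C1P. -/
/-!
In a consecutive-ones order the row `r` is the interval between its extreme elements `p` and `q`.
An interval meeting `r` and protruding beyond it must contain `p` or `q`, so each of the three
pairwise disjoint rows `A`, `B`, `C` contains one of these two elements: impossible by pigeonhole.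
-/

variable {C : Type*} [Fintype C] [DecidableEq C]

section Intervals

variable {ι α : Type*} [LinearOrder α]

theorem Finset.exists_extremes_of_interval {f : ι → α} {r : Finset ι} {a b : α}
    (hr : ∀ x, x ∈ r ↔ a ≤ f x ∧ f x ≤ b) (hne : r.Nonempty) :
    ∃ p q, ∀ x, x ∈ r ↔ f p ≤ f x ∧ f x ≤ f q := by
  obtain ⟨p, hp, hp_min⟩ := r.exists_min_image f hne
  obtain ⟨q, hq, hq_max⟩ := r.exists_max_image f hne
  refine ⟨p, q, fun x => ⟨fun hx => ⟨hp_min x hx, hq_max x hx⟩, fun hx => (hr x).2 ?_⟩⟩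
  exact ⟨((hr p).1 hp).1.trans hx.1, hx.2.trans ((hr q).1 hq).2⟩

theorem Finset.not_pairwise_disjoint_of_mem_pair {A B D : Finset ι} {p q : ι}
    (hA : p ∈ A ∨ q ∈ A) (hB : p ∈ B ∨ q ∈ B) (hD : p ∈ D ∨ q ∈ D) :
    ¬ (Disjoint A B ∧ Disjoint A D ∧ Disjoint B D) := by
  simp only [Finset.disjoint_left]
  tauto

variable [DecidableEq ι]

theorem Finset.mem_or_mem_of_interval_crosses {f : ι → α} {r X : Finset ι} {p q : ι} {a b : α}
    (hr : ∀ x, x ∈ r ↔ f p ≤ f x ∧ f x ≤ f q) (hX : ∀ x, x ∈ X ↔ a ≤ f x ∧ f x ≤ b)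
    (hmeet : (X ∩ r).Nonempty) (hout : (X \ r).Nonempty) : p ∈ X ∨ q ∈ X := by
  obtain ⟨x, hx⟩ := hmeet
  obtain ⟨y, hy⟩ := hout
  rw [Finset.mem_inter, hX, hr] at hx
  rw [Finset.mem_sdiff, hX, hr] at hy
  rw [hX, hX]
  rcases lt_or_ge (f y) (f p) with hyp | hpy
  · exact .inl ⟨hy.1.1.trans hyp.le, hx.2.1.trans hx.1.2⟩
  · have hqy : f q < f y := lt_of_not_ge fun hyq => hy.2 ⟨hpy, hyq⟩
    exact .inr ⟨hx.1.1.trans hx.2.2, hqy.le.trans hy.1.2⟩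

end Intervals

theorem formII_not_c1p (r A B c : Finset C)
    (hAB : A ∩ B = ∅) (hAC : A ∩ c = ∅) (hBC : B ∩ c = ∅)
    (hA1 : (A ∩ r).Nonempty) (hA2 : (A \ r).Nonempty)
    (hB1 : (B ∩ r).Nonempty) (hB2 : (B \ r).Nonempty)
    (hC1 : (c ∩ r).Nonempty) (hC2 : (c \ r).Nonempty) :
    ¬ IsC1P {r, A, B, c} := by
  rintro ⟨σ, hσ⟩
  obtain ⟨a, b, hr⟩ := hσ r (by simp)
  obtain ⟨p, q, hpq⟩ := Finset.exists_extremes_of_interval hr (hA1.mono Finset.inter_subset_right)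
  have crosses {X : Finset C} (hmem : X ∈ ({r, A, B, c} : Finset (Finset C)))
      (hmeet : (X ∩ r).Nonempty) (hout : (X \ r).Nonempty) : p ∈ X ∨ q ∈ X :=
    have ⟨_, _, hX⟩ := hσ X hmem
    Finset.mem_or_mem_of_interval_crosses hpq hX hmeet hout
  refine Finset.not_pairwise_disjoint_of_mem_pair (crosses (by simp) hA1 hA2)
    (crosses (by simp) hB1 hB2) (crosses (by simp) hC1 hC2) ?_
  simp only [Finset.disjoint_iff_inter_eq_empty]
  exact ⟨hAB, hAC, hBC⟩
end

section
/- Let k ≥ 4 and let r_0, r_1, …, r_{k-1} be subsets of a finite set C such that r_i ∩ r_{i+1 mod k} ≠ ∅ for all i, and r_i ∩ r_j = ∅ whenever i and j are not cyclically adjacent. Then the family {r_0, …, r_{k-1}} does not verify the C1P. -/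
/-!
Take an order of the columns under which every row is an interval, and pick the row whose leftmost
column `x` lies furthest to the right. A row meeting it starts at or before `x` and contains a
column at or after `x`, so, being an interval, it contains `x`. In a chordless cycle of length at
least four the two neighbours of that row meet it, hence share `x`, although they are disjoint.
-/

variable {C : Type*} [Fintype C] [DecidableEq C]

section Intervals

variable {α β ι : Type*} [LinearOrder β]

def Finset.IsIntervalUnder (f : α → β) (s : Finset α) : Prop :=
  ∃ a b, ∀ x, x ∈ s ↔ a ≤ f x ∧ f x ≤ b

theorem Finset.IsIntervalUnder.mem_of_le_of_le {f : α → β} {s : Finset α}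
    (hs : s.IsIntervalUnder f) {x y z : α} (hy : y ∈ s) (hz : z ∈ s)
    (hyx : f y ≤ f x) (hxz : f x ≤ f z) : x ∈ s := by
  obtain ⟨a, b, hab⟩ := hs
  exact (hab x).2 ⟨((hab y).1 hy).1.trans hyx, hxz.trans ((hab z).1 hz).2⟩

theorem exists_mem_of_inter_nonempty_of_isIntervalUnder [DecidableEq α] [Finite ι] [Nonempty ι]
    {f : α → β} {r : ι → Finset α} (hne : ∀ i, (r i).Nonempty)
    (hint : ∀ i, (r i).IsIntervalUnder f) :
    ∃ i, ∃ x ∈ r i, ∀ j, (r i ∩ r j).Nonempty → x ∈ r j := by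
  choose left hleft_mem hleft_le using fun i => (r i).exists_min_image f (hne i)
  obtain ⟨i, hi⟩ := Finite.exists_max fun i => f (left i)
  refine ⟨i, left i, hleft_mem i, fun j ⟨y, hy⟩ => ?_⟩
  rw [Finset.mem_inter] at hy
  exact (hint j).mem_of_le_of_le (hleft_mem j) hy.2 (hi j) (hleft_le i y hy.1)

end Intervals

theorem Fin.val_add_one_mod {n : ℕ} (i : Fin (n + 1)) :
    ((i : ℕ) + 1) % (n + 1) = ((i + 1 : Fin (n + 1)) : ℕ) := by
  simp [Fin.val_add]

open Fin.CommRing in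
theorem Fin.sub_one_add_one_nonadjacent {n : ℕ} (hn : 3 ≤ n) (i : Fin (n + 1)) :
    i - 1 ≠ i + 1 ∧ i + 1 ≠ i - 1 + 1 ∧ i - 1 ≠ i + 1 + 1 := by
  have hne_zero : ∀ c : ℕ, 0 < c → c ≤ n → (c : Fin (n + 1)) ≠ 0 := fun c hc hcn =>
    Fin.natCast_eq_zero.not.mpr (Nat.not_dvd_of_pos_of_lt hc (by omega))
  refine ⟨fun h => hne_zero 2 (by omega) (by omega) ?_,
    fun h => hne_zero 1 (by omega) (by omega) ?_,
    fun h => hne_zero 3 (by omega) (by omega) ?_⟩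
  · push_cast; linear_combination -h
  · push_cast; linear_combination h
  · push_cast; linear_combination -h

theorem formI_cycle_not_c1p (k : ℕ) (hk : 4 ≤ k) (r : Fin k → Finset C)
    (hadj : ∀ i : Fin k,
      (r i ∩ r ⟨((i : ℕ) + 1) % k, Nat.mod_lt _ (by omega)⟩).Nonempty)
    (hnonadj : ∀ i j : Fin k, (i : ℕ) ≠ (j : ℕ) →
      (j : ℕ) ≠ ((i : ℕ) + 1) % k → (i : ℕ) ≠ ((j : ℕ) + 1) % k →
      r i ∩ r j = ∅) :
    ¬ IsC1P (Finset.univ.image r) := by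
  rintro ⟨σ, hσ⟩
  obtain ⟨n, rfl⟩ : ∃ n, k = n + 1 := ⟨k - 1, by omega⟩
  have hadj' : ∀ i, (r i ∩ r (i + 1)).Nonempty := fun i => by
    simpa only [Fin.val_add_one_mod] using hadj i
  have hnonadj' : ∀ i j, i ≠ j → j ≠ i + 1 → i ≠ j + 1 → r i ∩ r j = ∅ :=
    fun i j hij hji hij' => hnonadj i j (Fin.val_ne_of_ne hij)
      (by rw [Fin.val_add_one_mod]; exact Fin.val_ne_of_ne hji)
      (by rw [Fin.val_add_one_mod]; exact Fin.val_ne_of_ne hij')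
  obtain ⟨i, x, -, hx⟩ := exists_mem_of_inter_nonempty_of_isIntervalUnder
    (fun j => (hadj' j).mono Finset.inter_subset_left)
    (fun j => hσ (r j) (Finset.mem_image_of_mem r (Finset.mem_univ j)))
  have hx_prev : x ∈ r (i - 1) := hx _ (by simpa [Finset.inter_comm] using hadj' (i - 1))
  have hx_next : x ∈ r (i + 1) := hx _ (hadj' i)
  obtain ⟨hne, hne_succ, hne_succ'⟩ := Fin.sub_one_add_one_nonadjacent (by omega) i
  have hdisj := hnonadj' (i - 1) (i + 1) hne hne_succ hne_succ'
  simpa [hdisj] using Finset.mem_inter.2 ⟨hx_prev, hx_next⟩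
end

section
/- For every m ≥ 3 there exists a finite set C and a family R of m subsets of C such that every 3-element subfamily of R is a Minimal Conflicting Set; consequently the number of MCS of R is binomial(m,3), which is Θ(m^3). -/
variable {C : Type*} [Fintype C] [DecidableEq C]

/-!
Let row `i` consist of the cells `(i, j)` and `(j, i)` of an `m × m` grid. For distinct `i, j, k`
the cell `(i, j)` lies in rows `i` and `j` but not in row `k`, and similarly for the other two
pairs; three intervals of a line cannot realize this pattern, so no three rows have the C1P.
Every family of at most two sets has the C1P, hence every triple of rows is an MCS, and a
subfamily of four or more rows properly contains a non-C1P triple. So the MCS among the rows are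
exactly the triples.
-/

open Finset

lemma Fin.exists_val_bounds_of_ordConnected {N : ℕ} (s : Set (Fin N)) (hs : s.OrdConnected) :
    ∃ a b : ℕ, ∀ k : Fin N, k ∈ s ↔ a ≤ (k : ℕ) ∧ (k : ℕ) ≤ b := by
  classical
  rcases s.eq_empty_or_nonempty with rfl | hne
  · exact ⟨1, 0, fun k => by simp; omega⟩
  have ht : s.toFinset.Nonempty := Set.toFinset_nonempty.mpr hne
  refine ⟨s.toFinset.min' ht, s.toFinset.max' ht, fun k => ⟨fun hk => ?_, fun hk => ?_⟩⟩
  · exact ⟨Fin.le_def.mp (min'_le _ k (Set.mem_toFinset.mpr hk)),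
      Fin.le_def.mp (le_max' _ k (Set.mem_toFinset.mpr hk))⟩
  · exact hs.out (Set.mem_toFinset.mp (min'_mem _ ht)) (Set.mem_toFinset.mp (max'_mem _ ht))
      ⟨Fin.le_def.mpr hk.1, Fin.le_def.mpr hk.2⟩

section C1P

variable {V : Type*} [Fintype V]

/-- Sorting `V` by the values of `f` makes every preimage of an order-connected set an interval. -/
theorem isC1P_of_forall_eq_preimage_ordConnected {α : Type*} [LinearOrder α]
    (R : Finset (Finset V)) (f : V → α)
    (h : ∀ r ∈ R, ∃ s : Set α, s.OrdConnected ∧ ∀ x, x ∈ r ↔ f x ∈ s) : IsC1P R := by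
  let e := Fintype.equivFin V
  let τ := Tuple.sort (f ∘ e.symm)
  refine ⟨e.trans τ.symm, fun r hr => ?_⟩
  obtain ⟨s, hs, hrs⟩ := h r hr
  obtain ⟨a, b, hab⟩ := Fin.exists_val_bounds_of_ordConnected _
    (hs.preimage_mono (Tuple.monotone_sort (f ∘ e.symm)))
  exact ⟨a, b, fun x => by simpa [hrs, τ] using hab ((e.trans τ.symm) x)⟩

/-- Order `V` as `A \ B`, `A ∩ B`, `B \ A`, then the rest. -/
theorem isC1P_of_subset_pair [DecidableEq V] (A B : Finset V) (T : Finset (Finset V))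
    (hT : T ⊆ {A, B}) : IsC1P T := by
  let f : V → ℕ := fun x => if x ∈ A then (if x ∈ B then 1 else 0) else (if x ∈ B then 2 else 3)
  refine isC1P_of_forall_eq_preimage_ordConnected T f fun r hr => ?_
  rcases Finset.mem_insert.mp (hT hr) with rfl | hrB
  · refine ⟨Set.Icc 0 1, Set.ordConnected_Icc, fun x => ?_⟩
    by_cases hA : x ∈ r <;> by_cases hB : x ∈ B <;> simp [f, hA, hB]
  · rw [Finset.mem_singleton.mp hrB]
    refine ⟨Set.Icc 1 2, Set.ordConnected_Icc, fun x => ?_⟩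
    by_cases hA : x ∈ A <;> by_cases hB : x ∈ B <;> simp [f, hA, hB]

theorem isC1P_of_card_le_two (T : Finset (Finset V)) (hT : T.card ≤ 2) : IsC1P T := by
  classical
  obtain ⟨A, B, hAB⟩ : ∃ A B : Finset V, T ⊆ {A, B} := by
    interval_cases h : T.card
    · exact ⟨∅, ∅, by simp [Finset.card_eq_zero.mp h]⟩
    · obtain ⟨A, rfl⟩ := Finset.card_eq_one.mp h
      exact ⟨A, A, by simp⟩
    · obtain ⟨A, B, -, rfl⟩ := Finset.card_eq_two.mp h
      exact ⟨A, B, subset_rfl⟩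
  exact isC1P_of_subset_pair A B T hAB

/-- Any two of `x, y, z` share a member of `R` avoiding the third; on a line this fails for the
point lying between the other two. -/
theorem not_isC1P_of_mem_inter_sdiff [DecidableEq V] {R : Finset (Finset V)} {A B D : Finset V}
    (hA : A ∈ R) (hB : B ∈ R) (hD : D ∈ R) {x y z : V}
    (hx : x ∈ (A ∩ B) \ D) (hy : y ∈ (B ∩ D) \ A) (hz : z ∈ (A ∩ D) \ B) : ¬ IsC1P R := by
  rintro ⟨σ, h⟩
  obtain ⟨a₁, b₁, hA'⟩ := h A hA
  obtain ⟨a₂, b₂, hB'⟩ := h B hB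
  obtain ⟨a₃, b₃, hD'⟩ := h D hD
  simp only [Finset.mem_sdiff, Finset.mem_inter, hA', hB', hD'] at hx hy hz
  omega

theorem isMCS_of_card_eq_three {S : Finset (Finset V)} (hS : S.card = 3) (h : ¬ IsC1P S) :
    IsMCS S :=
  ⟨Finset.card_pos.mp (by omega), h,
    fun T hT => isC1P_of_card_le_two T (by have := Finset.card_lt_card hT; omega)⟩

theorem setOf_isMCS_subset_eq_powersetCard_three (R : Finset (Finset V))
    (hR : ∀ S ⊆ R, S.card = 3 → ¬ IsC1P S) :
    {S : Finset (Finset V) | S ⊆ R ∧ IsMCS S} = ↑(R.powersetCard 3) := by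
  ext S
  simp only [Set.mem_ofPred_eq, Finset.mem_coe, Finset.mem_powersetCard]
  refine ⟨fun ⟨hSR, hMCS⟩ => ⟨hSR, ?_⟩,
    fun ⟨hSR, hS3⟩ => ⟨hSR, isMCS_of_card_eq_three hS3 (hR S hSR hS3)⟩⟩
  obtain ⟨-, hS, hmin⟩ := hMCS
  by_contra hne
  rcases lt_or_gt_of_ne hne with hlt | hgt
  · exact hS (isC1P_of_card_le_two S (by omega))
  · obtain ⟨T, hTS, hT⟩ := Finset.exists_subset_card_eq (show 3 ≤ S.card by omega)
    have hTS' : T ⊂ S := Finset.ssubset_iff_subset_ne.mpr ⟨hTS, by rintro rfl; omega⟩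
    exact hR T (hTS.trans hSR) hT (hmin T hTS')

end C1P

def row (m : ℕ) (i : Fin m) : Finset (Fin (m * m)) :=
  {p | (finProdFinEquiv.symm p).1 = i ∨ (finProdFinEquiv.symm p).2 = i}

lemma finProdFinEquiv_mem_row {m : ℕ} (i j k : Fin m) :
    finProdFinEquiv (i, j) ∈ row m k ↔ i = k ∨ j = k := by
  simp only [row, Finset.mem_filter, Finset.mem_univ, true_and, Equiv.symm_apply_apply]

lemma row_injective (m : ℕ) : Function.Injective (row m) := by
  intro i j hij
  have h := (finProdFinEquiv_mem_row i i i).mpr (Or.inl rfl)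
  rw [hij, finProdFinEquiv_mem_row, or_self] at h
  exact h

lemma not_isC1P_row_triple {m : ℕ} {i j k : Fin m} (hij : i ≠ j) (hik : i ≠ k) (hjk : j ≠ k) :
    ¬ IsC1P ({row m i, row m j, row m k} : Finset (Finset (Fin (m * m)))) := by
  refine not_isC1P_of_mem_inter_sdiff (A := row m i) (B := row m j) (D := row m k)
    (x := finProdFinEquiv (i, j)) (y := finProdFinEquiv (j, k)) (z := finProdFinEquiv (i, k))
    (by simp) (by simp) (by simp) ?_ ?_ ?_ <;>
  simp [finProdFinEquiv_mem_row, hij, hik, hjk, hij.symm, hik.symm, hjk.symm]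

lemma not_isC1P_of_subset_image_row {m : ℕ} {S : Finset (Finset (Fin (m * m)))}
    (hS : S ⊆ univ.image (row m)) (h3 : S.card = 3) : ¬ IsC1P S := by
  obtain ⟨I, -, rfl⟩ := Finset.subset_image_iff.mp hS
  rw [Finset.card_image_of_injective _ (row_injective m)] at h3
  obtain ⟨i, j, k, hij, hik, hjk, rfl⟩ := Finset.card_eq_three.mp h3
  simpa [Finset.image_insert] using not_isC1P_row_triple hij hik hjk

theorem exists_family_all_triples_mcs :
    ∀ m : ℕ, 3 ≤ m →
      ∃ (n : ℕ) (R : Finset (Finset (Fin n))),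
        R.card = m ∧ (∀ S ⊆ R, S.card = 3 → IsMCS S) ∧
        Set.ncard {S : Finset (Finset (Fin n)) | S ⊆ R ∧ IsMCS S}
          = m.choose 3 := by
  intro m _
  have hrows : ∀ S ⊆ univ.image (row m), S.card = 3 → ¬ IsC1P S :=
    fun _ => not_isC1P_of_subset_image_row
  have hcard : (univ.image (row m)).card = m := by
    rw [Finset.card_image_of_injective _ (row_injective m), Finset.card_univ, Fintype.card_fin]
  refine ⟨m * m, univ.image (row m), hcard,
    fun S hS h3 => isMCS_of_card_eq_three h3 (hrows S hS h3), ?_⟩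
  rw [setOf_isMCS_subset_eq_powersetCard_three _ hrows, Set.ncard_coe_finset, card_powersetCard,
    hcard]
end
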